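/- (Global maximum at zero correlation) In the trivariate normal model with unit variances, correlations θ^S, θ^H > 0 between Q and the two scores, and correlation θ between the scores, for any thresholds τ^S, τ^H and any θ ∈ (0,1) with the covariance matrix positive definite: E[Q | Q^S > τ^S, Q^H > τ^H] evaluated at score-correlation 0 strictly exceeds its value at score-correlation θ. That is, θ^S·φ(τ^S)/Φ̄(τ^S) + θ^H·φ(τ^H)/Φ̄(τ^H) > [θ^S φ(τ^S) Φ̄((τ^H−θτ^S)/√(1−θ²)) + θ^H φ(τ^H) Φ̄((τ^S−θτ^H)/√(1−θ²))]/Φ̄₂(τ^S,τ^H;θ). -/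

import Mathlib

open Real MeasureTheory Set Matrix

/-- standard normal density -/
noncomputable def phi (x : ℝ) : ℝ := Real.exp (-x^2/2) / Real.sqrt (2*Real.pi)

/-- standard normal CDF -/
noncomputable def Phi (x : ℝ) : ℝ := ∫ t in Set.Iic x, phi t

/-- standard normal survival function -/
noncomputable def PhiBar (x : ℝ) : ℝ := ∫ t in Set.Ioi x, phi t

/-- standard bivariate normal density with correlation ρ -/
noncomputable def phi2 (x y ρ : ℝ) : ℝ :=
  Real.exp (-(x^2 - 2*ρ*x*y + y^2)/(2*(1-ρ^2))) / (2*Real.pi*Real.sqrt (1-ρ^2))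

/-- standard bivariate normal CDF with correlation ρ -/
noncomputable def Phi2 (a b ρ : ℝ) : ℝ := ∫ x in Set.Iic a, ∫ y in Set.Iic b, phi2 x y ρ

/-- standard bivariate normal joint survival function with correlation ρ -/
noncomputable def PhiBar2 (a b ρ : ℝ) : ℝ := ∫ x in Set.Ioi a, ∫ y in Set.Ioi b, phi2 x y ρ

/-- covariance matrix of (Q, Q^S, Q^H) -/
noncomputable def covM (θS θH θ : ℝ) : Matrix (Fin 3) (Fin 3) ℝ :=
  !![1, θS, θH; θS, 1, θ; θH, θ, 1]

/-- trivariate normal density of (Q, Q^S, Q^H) with zero means, unit variances and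
correlations θS = Corr(Q,Q^S), θH = Corr(Q,Q^H), θ = Corr(Q^S,Q^H) -/
noncomputable def pdf3 (θS θH θ : ℝ) (v : Fin 3 → ℝ) : ℝ :=
  Real.exp (-(v ⬝ᵥ ((covM θS θH θ)⁻¹ *ᵥ v))/2) /
    Real.sqrt ((2*Real.pi)^3 * (covM θS θH θ).det)

/-!
Conditioning on the first coordinate, `Φ̄₂(a, b; θ) = ∫_{x > a} φ(x) Φ̄((b - θx)/√(1 - θ²)) dx`.
For `θ > 0` the conditional survival probability `Φ̄((b - θx)/√(1 - θ²))` is strictly increasing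
in `x`, so on the range of integration it exceeds its value at `x = a`; hence
`Φ̄(a) Φ̄((b - θa)/√(1 - θ²)) < Φ̄₂(a, b; θ)`. Applied at `(τˢ, τᴴ)` and, by the symmetry of `Φ̄₂`,
at `(τᴴ, τˢ)`, this makes each summand on the right strictly smaller than the corresponding
summand on the left.
-/

lemma phi_pos (x : ℝ) : 0 < phi x := by
  unfold phi; positivity

lemma integral_phi : ∫ x, phi x = 1 := by
  have h : phi = fun x => Real.exp (-(1 / 2) * x ^ 2) / Real.sqrt (2 * π) := by
    ext x; rw [phi]; ring_nf
  rw [h, integral_div, integral_gaussian, show π / (1 / 2) = 2 * π by ring,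
    div_self (by positivity)]

lemma integrable_phi : Integrable phi :=
  Integrable.of_integral_ne_zero (by rw [integral_phi]; exact one_ne_zero)

lemma setIntegral_phi_pos {s : Set ℝ} (hs : 0 < volume s) : 0 < ∫ t in s, phi t := by
  refine (setIntegral_pos_iff_support_of_nonneg_ae
    (.of_forall fun t => (phi_pos t).le) integrable_phi.integrableOn).mpr ?_
  rwa [show Function.support phi = univ from eq_univ_of_forall fun t => (phi_pos t).ne',
    univ_inter]

lemma phiBar_pos (x : ℝ) : 0 < PhiBar x :=
  setIntegral_phi_pos (by simp)

lemma phiBar_le_one (x : ℝ) : PhiBar x ≤ 1 :=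
  integral_phi ▸ setIntegral_le_integral integrable_phi (.of_forall fun t => (phi_pos t).le)

lemma phiBar_strictAnti : StrictAnti PhiBar := by
  intro u v huv
  have hsplit : PhiBar u = (∫ t in Ioc u v, phi t) + PhiBar v := by
    rw [PhiBar, ← Ioc_union_Ioi_eq_Ioi huv.le, setIntegral_union (Ioc_disjoint_Ioi le_rfl)
      measurableSet_Ioi integrable_phi.integrableOn integrable_phi.integrableOn, PhiBar]
  linarith [setIntegral_phi_pos (s := Ioc u v) (by simp [huv])]

lemma setIntegral_Ioi_phi_sub_div {s : ℝ} (hs : 0 < s) (m b : ℝ) :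
    ∫ y in Ioi b, phi ((y - m) / s) = s * PhiBar ((b - m) / s) := by
  have hshift : ∫ y in Ioi b, phi ((y - m) / s) = ∫ y in Ioi (b - m), phi (y / s) := by
    have := (measurePreserving_sub_right volume m).setIntegral_preimage_emb
      (measurableEmbedding_subRight m) (fun y => phi (y / s)) (Ioi (b - m))
    simpa [preimage_sub_const_Ioi] using this
  rw [hshift]
  simp_rw [div_eq_mul_inv]
  rw [integral_comp_mul_right_Ioi _ _ (inv_pos.mpr hs), inv_inv, smul_eq_mul, PhiBar]

section Bivariate

variable {ρ : ℝ}

lemma phi2_comm (x y ρ : ℝ) : phi2 x y ρ = phi2 y x ρ := by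
  unfold phi2; ring_nf

lemma phi2_eq_phi_mul_phi (hρ : ρ ^ 2 < 1) (x y : ℝ) :
    phi2 x y ρ = phi x * phi ((y - ρ * x) / √(1 - ρ ^ 2)) / √(1 - ρ ^ 2) := by
  have h : 0 < 1 - ρ ^ 2 := by linarith
  have hs : 0 < √(1 - ρ ^ 2) := Real.sqrt_pos.mpr h
  have hexp : Real.exp (-(x ^ 2 - 2 * ρ * x * y + y ^ 2) / (2 * (1 - ρ ^ 2))) =
      Real.exp (-x ^ 2 / 2) * Real.exp (-((y - ρ * x) / √(1 - ρ ^ 2)) ^ 2 / 2) := by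
    rw [← Real.exp_add, div_pow, Real.sq_sqrt h.le]
    congr 1
    field_simp
    ring
  rw [phi2, hexp, phi, phi]
  field_simp
  rw [Real.sq_sqrt (by positivity)]

lemma setIntegral_Ioi_phi2 (hρ : ρ ^ 2 < 1) (x b : ℝ) :
    ∫ y in Ioi b, phi2 x y ρ = phi x * PhiBar ((b - ρ * x) / √(1 - ρ ^ 2)) := by
  have hs : 0 < √(1 - ρ ^ 2) := Real.sqrt_pos.mpr (by linarith)
  simp_rw [phi2_eq_phi_mul_phi hρ, mul_div_assoc, integral_const_mul, integral_div,
    setIntegral_Ioi_phi_sub_div hs, mul_div_cancel_left₀ _ hs.ne']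

lemma phi2_le (hρ : ρ ^ 2 < 1) (x y : ℝ) :
    phi2 x y ρ ≤ (2 * π * √(1 - ρ ^ 2))⁻¹ *
      (Real.exp (-(1 / 4) * x ^ 2) * Real.exp (-(1 / 4) * y ^ 2)) := by
  have h : 0 < 1 - ρ ^ 2 := by linarith
  rw [phi2, div_eq_inv_mul, ← Real.exp_add]
  gcongr
  rw [div_le_iff₀ (by positivity)]
  -- `2 (x² - 2ρxy + y²) = (y - ρx)² + (x - ρy)² + (1 - ρ²)(x² + y²) ≥ (1 - ρ²)(x² + y²)`
  nlinarith [sq_nonneg (y - ρ * x), sq_nonneg (x - ρ * y),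
    mul_nonneg h.le (add_nonneg (sq_nonneg x) (sq_nonneg y))]

lemma integrable_phi2 (hρ : ρ ^ 2 < 1) :
    Integrable (fun p : ℝ × ℝ => phi2 p.1 p.2 ρ) (volume.prod volume) := by
  have hg : Integrable (fun x : ℝ => Real.exp (-(1 / 4) * x ^ 2)) :=
    integrable_exp_neg_mul_sq (by norm_num)
  refine ((hg.mul_prod hg).const_mul (2 * π * √(1 - ρ ^ 2))⁻¹).mono
    (by unfold phi2; fun_prop : Continuous _).aestronglyMeasurable (.of_forall fun p => ?_)
  have hpos : 0 ≤ phi2 p.1 p.2 ρ := by unfold phi2; positivity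
  rw [Real.norm_of_nonneg hpos, Real.norm_of_nonneg (by positivity)]
  exact phi2_le hρ p.1 p.2

lemma phiBar2_comm (hρ : ρ ^ 2 < 1) (a b : ℝ) : PhiBar2 a b ρ = PhiBar2 b a ρ := by
  have hint : Integrable (Function.uncurry fun x y => phi2 x y ρ)
      ((volume.restrict (Ioi a)).prod (volume.restrict (Ioi b))) := by
    rw [Measure.prod_restrict]
    exact (integrable_phi2 hρ).restrict
  simp_rw [PhiBar2, integral_integral_swap hint, phi2_comm _ _ ρ]

end Bivariate

lemma mul_setIntegral_Ioi_lt_of_strictMonoOn {f g : ℝ → ℝ} {a : ℝ}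
    (hf : ∀ x ∈ Ioi a, 0 < f x) (hg : StrictMonoOn g (Ici a))
    (hfi : IntegrableOn f (Ioi a)) (hfgi : IntegrableOn (fun x => f x * g x) (Ioi a)) :
    g a * ∫ x in Ioi a, f x < ∫ x in Ioi a, f x * g x := by
  have hpos : ∀ x ∈ Ioi a, 0 < f x * g x - g a * f x := fun x hx => by
    have := hg self_mem_Ici (mem_Ici_of_Ioi hx) hx
    nlinarith [hf x hx]
  have hdi : IntegrableOn (fun x => f x * g x - g a * f x) (Ioi a) := hfgi.sub (hfi.const_mul _)
  have hint : 0 < ∫ x in Ioi a, (f x * g x - g a * f x) := by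
    refine (setIntegral_pos_iff_support_of_nonneg_ae ?_ hdi).mpr ?_
    · exact (ae_restrict_iff' measurableSet_Ioi).mpr (.of_forall fun x hx => (hpos x hx).le)
    · rw [inter_eq_right.mpr fun x hx => Function.mem_support.mpr (hpos x hx).ne']
      simp
  rw [integral_sub hfgi (hfi.const_mul _), integral_const_mul] at hint
  linarith

lemma strictMono_phiBar_sub_mul_div {θ s : ℝ} (hθ : 0 < θ) (hs : 0 < s) (b : ℝ) :
    StrictMono fun x => PhiBar ((b - θ * x) / s) :=
  phiBar_strictAnti.comp fun _ _ hxy => by gcongr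

lemma integrable_phi_mul_phiBar (g : ℝ → ℝ) (hg : Measurable g) :
    Integrable fun x => phi x * PhiBar (g x) := by
  refine integrable_phi.mul_bdd (c := 1)
    (phiBar_strictAnti.antitone.measurable.comp hg).aestronglyMeasurable (.of_forall fun x => ?_)
  rw [Real.norm_of_nonneg (phiBar_pos _).le]
  exact phiBar_le_one _

lemma phiBar_mul_phiBar_lt_phiBar2 {θ : ℝ} (hθ : θ ∈ Ioo 0 1) (a b : ℝ) :
    PhiBar a * PhiBar ((b - θ * a) / √(1 - θ ^ 2)) < PhiBar2 a b θ := by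
  have hθ2 : θ ^ 2 < 1 := by nlinarith [hθ.1, hθ.2]
  have hs : 0 < √(1 - θ ^ 2) := Real.sqrt_pos.mpr (by linarith)
  have key := mul_setIntegral_Ioi_lt_of_strictMonoOn (a := a) (fun x _ => phi_pos x)
    ((strictMono_phiBar_sub_mul_div hθ.1 hs b).strictMonoOn _) integrable_phi.integrableOn
    (integrable_phi_mul_phiBar _ (by fun_prop)).integrableOn
  simp_rw [PhiBar2, setIntegral_Ioi_phi2 hθ2]
  rwa [mul_comm, PhiBar]

lemma mul_div_lt_div_of_mul_lt {c p u P : ℝ} (hc : 0 < c) (hp : 0 < p) (hP : 0 < P)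
    (h : p * u < P) : c * u / P < c / p := by
  rw [div_lt_div_iff₀ hP hp]
  nlinarith

theorem hire_quality_max_at_zero_corr_general (θS θH θ τS τH : ℝ)
    (hS : 0 < θS) (hH : 0 < θH) (hθ : θ ∈ Set.Ioo (0 : ℝ) 1) :
    θS * phi τS / PhiBar τS + θH * phi τH / PhiBar τH >
    (θS * phi τS * PhiBar ((τH - θ*τS) / Real.sqrt (1 - θ^2)) +
      θH * phi τH * PhiBar ((τS - θ*τH) / Real.sqrt (1 - θ^2))) /
      PhiBar2 τS τH θ := by
  have hθ2 : θ ^ 2 < 1 := by nlinarith [hθ.1, hθ.2]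
  have hS' := phiBar_mul_phiBar_lt_phiBar2 hθ τS τH
  have hH' := phiBar2_comm hθ2 τH τS ▸ phiBar_mul_phiBar_lt_phiBar2 hθ τH τS
  have hP := (mul_pos (phiBar_pos τS) (phiBar_pos _)).trans hS'
  rw [gt_iff_lt, add_div]
  exact add_lt_add
    (mul_div_lt_div_of_mul_lt (mul_pos hS (phi_pos τS)) (phiBar_pos τS) hP hS')
    (mul_div_lt_div_of_mul_lt (mul_pos hH (phi_pos τH)) (phiBar_pos τH) hP hH')

/-- expected hire quality is globally maximized at zero score correlation. -/
theorem hire_quality_max_at_zero_corr (θS θH θ τS τH : ℝ)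
    (hS : 0 < θS) (hH : 0 < θH) (hθ : θ ∈ Set.Ioo (0 : ℝ) 1)
    (hpd : (covM θS θH θ).PosDef) :
    θS * phi τS / PhiBar τS + θH * phi τH / PhiBar τH >
    (θS * phi τS * PhiBar ((τH - θ*τS) / Real.sqrt (1 - θ^2)) +
      θH * phi τH * PhiBar ((τS - θ*τH) / Real.sqrt (1 - θ^2))) /
      PhiBar2 τS τH θ :=
  hire_quality_max_at_zero_corr_general θS θH θ τS τH hS hH hθ
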